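/- (Signaling direction of Theorem 1.) Let ρ be the canonical two-qubit state with parameters mx, my, mz, m'x, m'y, m'z, Cxx, Cyy, Czz, assumed positive semidefinite, and suppose at least one of my·m'x, my·m'y − Cyy, my·m'z is nonzero. Then there exist α, z, u : ℝ such that Re(trace ρ₊) ≠ 0, Re(trace ρ₋) ≠ 0, and P₊(Π(z,u)) ≠ P₋(Π(z,u)); i.e., Bob can predict Alice's randomly chosen operation with a finite probability bias. -/

import Mathlib

open Matrix Kronecker Complex
open scoped ComplexOrder

noncomputable section

/-- Pauli matrix `σx`. -/
def σx : Matrix (Fin 2) (Fin 2) ℂ := !![0, 1; 1, 0]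

/-- Pauli matrix `σy`. -/
def σy : Matrix (Fin 2) (Fin 2) ℂ := !![0, -Complex.I; Complex.I, 0]

/-- Pauli matrix `σz`. -/
def σz : Matrix (Fin 2) (Fin 2) ℂ := !![1, 0; 0, -1]

/-- The simulated PT-symmetric evolution operator at the chosen time. -/
def Upt (α : ℝ) : Matrix (Fin 2) (Fin 2) ℂ :=
  !![(Real.sin α : ℂ), -Complex.I; -Complex.I, -(Real.sin α : ℂ)]

/-- Alice's operation `A₊` (do nothing). -/
def Apos : Matrix (Fin 2) (Fin 2) ℂ := 1

/-- Alice's operation `A₋` (bit flip `σx`). -/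
def Aneg : Matrix (Fin 2) (Fin 2) ℂ := σx

/-- Unnormalized post-selected state after Alice applies `A₊` followed by the
simulated PT evolution. -/
def postPlus (α : ℝ) (ρ : Matrix (Fin 2 × Fin 2) (Fin 2 × Fin 2) ℂ) :
    Matrix (Fin 2 × Fin 2) (Fin 2 × Fin 2) ℂ :=
  ((Upt α * Apos) ⊗ₖ (1 : Matrix (Fin 2) (Fin 2) ℂ)) * ρ *
    ((Upt α * Apos) ⊗ₖ (1 : Matrix (Fin 2) (Fin 2) ℂ))ᴴ

/-- Unnormalized post-selected state after Alice applies `A₋` followed by the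
simulated PT evolution. -/
def postMinus (α : ℝ) (ρ : Matrix (Fin 2 × Fin 2) (Fin 2 × Fin 2) ℂ) :
    Matrix (Fin 2 × Fin 2) (Fin 2 × Fin 2) ℂ :=
  ((Upt α * Aneg) ⊗ₖ (1 : Matrix (Fin 2) (Fin 2) ℂ)) * ρ *
    ((Upt α * Aneg) ⊗ₖ (1 : Matrix (Fin 2) (Fin 2) ℂ))ᴴ

/-- Probability that Bob obtains outcome `Π` given Alice applied `A₊`. -/
def Pplus (α : ℝ) (ρ : Matrix (Fin 2 × Fin 2) (Fin 2 × Fin 2) ℂ)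
    (Pi : Matrix (Fin 2) (Fin 2) ℂ) : ℝ :=
  ((((1 : Matrix (Fin 2) (Fin 2) ℂ) ⊗ₖ Pi) * postPlus α ρ).trace).re /
    ((postPlus α ρ).trace).re

/-- Probability that Bob obtains outcome `Π` given Alice applied `A₋`. -/
def Pminus (α : ℝ) (ρ : Matrix (Fin 2 × Fin 2) (Fin 2 × Fin 2) ℂ)
    (Pi : Matrix (Fin 2) (Fin 2) ℂ) : ℝ :=
  ((((1 : Matrix (Fin 2) (Fin 2) ℂ) ⊗ₖ Pi) * postMinus α ρ).trace).re /
    ((postMinus α ρ).trace).re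

/-- Bob's `σy`-measurement projector onto `|+_y⟩ = (|0⟩ + i|1⟩)/√2`. -/
def Piy : Matrix (Fin 2) (Fin 2) ℂ :=
  (1/2 : ℂ) • !![1, -Complex.I; Complex.I, 1]

/-- Bob's rank-one projector `Π(z,u)` for an arbitrary projective measurement. -/
def Pizu (z u : ℝ) : Matrix (Fin 2) (Fin 2) ℂ :=
  !![((Real.cos (z/2))^2 : ℂ),
     (Real.cos (z/2) : ℂ) * (Real.sin (z/2) : ℂ) * Complex.exp (-(Complex.I * u));
     (Real.cos (z/2) : ℂ) * (Real.sin (z/2) : ℂ) * Complex.exp (Complex.I * u),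
     ((Real.sin (z/2))^2 : ℂ)]

/-- The single-qubit state `|+⟩ = (|0⟩ + |1⟩)/√2`. -/
def ketPlus : Fin 2 → ℂ := ![((1 / Real.sqrt 2 : ℝ) : ℂ), ((1 / Real.sqrt 2 : ℝ) : ℂ)]

/-- The single-qubit state `|−⟩ = (|0⟩ − |1⟩)/√2`. -/
def ketMinus : Fin 2 → ℂ := ![((1 / Real.sqrt 2 : ℝ) : ℂ), ((-(1 / Real.sqrt 2) : ℝ) : ℂ)]

/-- The (normalized) pure state `|ψ_{β,γ}⟩ = (β|++⟩ + γ|−−⟩)/√(β²+γ²)`. -/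
def ψpure (β γ : ℝ) : Fin 2 × Fin 2 → ℂ := fun q =>
  ((β : ℂ) * (ketPlus q.1 * ketPlus q.2) + (γ : ℂ) * (ketMinus q.1 * ketMinus q.2)) /
    ((Real.sqrt (β^2 + γ^2) : ℝ) : ℂ)

/-- The pure two-qubit density matrix `ρ_{β,γ} = |ψ_{β,γ}⟩⟨ψ_{β,γ}|`. -/
def ρpure (β γ : ℝ) : Matrix (Fin 2 × Fin 2) (Fin 2 × Fin 2) ℂ :=
  Matrix.vecMulVec (ψpure β γ) (fun q => starRingEnd ℂ (ψpure β γ q))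

/-- The maximally entangled state `|ψ⁺⟩ = (|00⟩ + |11⟩)/√2`. -/
def ψmax : Fin 2 × Fin 2 → ℂ := fun q =>
  if q.1 = q.2 then ((1 / Real.sqrt 2 : ℝ) : ℂ) else 0

/-- The two-qubit Werner state `ρ_W(p) = p |ψ⁺⟩⟨ψ⁺| + ((1-p)/4) 1`. -/
def ρWerner (p : ℝ) : Matrix (Fin 2 × Fin 2) (Fin 2 × Fin 2) ℂ :=
  (p : ℂ) • Matrix.vecMulVec ψmax (fun q => starRingEnd ℂ (ψmax q)) +
    (((1 - p) / 4 : ℝ) : ℂ) • 1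

/-- The canonical two-qubit state with magnetizations `mx my mz` (Alice),
`nx ny nz` (Bob) and diagonal correlators `Cxx Cyy Czz`. -/
def ρcan (mx my mz nx ny nz Cxx Cyy Czz : ℝ) :
    Matrix (Fin 2 × Fin 2) (Fin 2 × Fin 2) ℂ :=
  (1/4 : ℂ) • ((1 : Matrix (Fin 2 × Fin 2) (Fin 2 × Fin 2) ℂ)
    + (mx : ℂ) • (σx ⊗ₖ (1 : Matrix (Fin 2) (Fin 2) ℂ))
    + (my : ℂ) • (σy ⊗ₖ (1 : Matrix (Fin 2) (Fin 2) ℂ))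
    + (mz : ℂ) • (σz ⊗ₖ (1 : Matrix (Fin 2) (Fin 2) ℂ))
    + (nx : ℂ) • ((1 : Matrix (Fin 2) (Fin 2) ℂ) ⊗ₖ σx)
    + (ny : ℂ) • ((1 : Matrix (Fin 2) (Fin 2) ℂ) ⊗ₖ σy)
    + (nz : ℂ) • ((1 : Matrix (Fin 2) (Fin 2) ℂ) ⊗ₖ σz)
    + (Cxx : ℂ) • (σx ⊗ₖ σx)
    + (Cyy : ℂ) • (σy ⊗ₖ σy)
    + (Czz : ℂ) • (σz ⊗ₖ σz))

/-- Bob's reduced matrix: the partial trace over Alice's subsystem. -/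
def ptraceA (X : Matrix (Fin 2 × Fin 2) (Fin 2 × Fin 2) ℂ) :
    Matrix (Fin 2) (Fin 2) ℂ :=
  Matrix.of fun i j => ∑ k : Fin 2, X (k, i) (k, j)

/-- The trace distance `T(A,B) = (1/2) tr √((A-B)ᴴ (A-B))`, where the square
root is the positive semidefinite square root. -/
def traceDist (A B : Matrix (Fin 2) (Fin 2) ℂ) : ℝ :=
  (1/2) * ((((Matrix.posSemidef_conjTranspose_mul_self (A - B)).isHermitian.eigenvectorUnitary :
      Matrix (Fin 2) (Fin 2) ℂ) *
    Matrix.diagonal (((↑) : ℝ → ℂ) ∘ Real.sqrt ∘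
      (Matrix.posSemidef_conjTranspose_mul_self (A - B)).isHermitian.eigenvalues) *
    (star (Matrix.posSemidef_conjTranspose_mul_self (A - B)).isHermitian.eigenvectorUnitary :
      Matrix (Fin 2) (Fin 2) ℂ)).trace).re


/-!
Bob's projector acts only on his qubit, so Alice's operation enters `P±(Π)` only through the
Gram matrix `(U_α A±)ᴴ (U_α A±) = c • 1 ± d • σy` with `c = 1 + sin² α`, `d = 2 sin α`.
Against the canonical state this gives `tr ρ± = c ± my d` and, for `Π(z,u)` with Bloch vector
`b`, `tr ((1 ⊗ Π) ρ±) = (c ± my d + c (m'·b) ± Cyy d b_y) / 2`. Cross-multiplying, `P₊ = P₋`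
iff `my (m'·b) - Cyy b_y = 0`. So take `sin α ≠ 0` small enough that both traces are positive,
and `b` a coordinate axis on which `(my m'x, my m'y - Cyy, my m'z)` does not vanish.
-/
section Kronecker

variable {R m n : Type*} [Fintype m] [Fintype n] [DecidableEq m] [DecidableEq n]
  [CommRing R] [StarRing R]

lemma trace_one_kronecker_mul_conj (V : Matrix m m R) (K : Matrix n n R)
    (ρ : Matrix (m × n) (m × n) R) :
    ((1 ⊗ₖ K) * ((V ⊗ₖ 1) * ρ * (V ⊗ₖ 1)ᴴ)).trace = (((Vᴴ * V) ⊗ₖ K) * ρ).trace := by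
  rw [conjTranspose_kronecker, conjTranspose_one, ← Matrix.mul_assoc, ← Matrix.mul_assoc,
    trace_mul_cycle, ← Matrix.mul_assoc, ← mul_kronecker_mul, ← mul_kronecker_mul,
    Matrix.one_mul, Matrix.mul_one, Matrix.mul_one]

end Kronecker

lemma trace_kronecker_mul_ρcan (H K : Matrix (Fin 2) (Fin 2) ℂ)
    (mx my mz nx ny nz Cxx Cyy Czz : ℝ) :
    ((H ⊗ₖ K) * ρcan mx my mz nx ny nz Cxx Cyy Czz).trace =
    (1/4) * (H.trace * K.trace
      + mx * ((H * σx).trace * K.trace)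
      + my * ((H * σy).trace * K.trace)
      + mz * ((H * σz).trace * K.trace)
      + nx * (H.trace * (K * σx).trace)
      + ny * (H.trace * (K * σy).trace)
      + nz * (H.trace * (K * σz).trace)
      + Cxx * ((H * σx).trace * (K * σx).trace)
      + Cyy * ((H * σy).trace * (K * σy).trace)
      + Czz * ((H * σz).trace * (K * σz).trace)) := by
  rw [ρcan, ← one_kronecker_one]
  simp only [Matrix.mul_smul, Matrix.mul_add, trace_add, trace_smul, ← mul_kronecker_mul,
    trace_kronecker, Matrix.mul_one, smul_eq_mul]

lemma trace_smul_one_add_smul_σy_kronecker_mul_ρcan (c d : ℂ) (K : Matrix (Fin 2) (Fin 2) ℂ)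
    (mx my mz nx ny nz Cxx Cyy Czz : ℝ) :
    (((c • 1 + d • σy) ⊗ₖ K) * ρcan mx my mz nx ny nz Cxx Cyy Czz).trace =
      ((c + my * d) * K.trace
        + c * (nx * (K * σx).trace + ny * (K * σy).trace + nz * (K * σz).trace)
        + Cyy * d * (K * σy).trace) / 2 := by
  have htr : (c • 1 + d • σy).trace = 2 * c := by simp [σy, trace_fin_two]; ring
  have hx : ((c • 1 + d • σy) * σx).trace = 0 := by
    simp [σx, σy, trace_fin_two, Matrix.add_mul]
  have hy : ((c • 1 + d • σy) * σy).trace = 2 * d := by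
    simp [σy, trace_fin_two, Matrix.add_mul]; ring_nf; rw [Complex.I_sq]; ring
  have hz : ((c • 1 + d • σy) * σz).trace = 0 := by
    simp [σz, σy, trace_fin_two, Matrix.add_mul]
  rw [trace_kronecker_mul_ρcan, htr, hx, hy, hz]
  ring

lemma Upt_mul_Apos_gram (α : ℝ) :
    (Upt α * Apos)ᴴ * (Upt α * Apos) =
      ((1 + Real.sin α ^ 2 : ℝ) : ℂ) • 1 + ((2 * Real.sin α : ℝ) : ℂ) • σy := by
  unfold Upt
  generalize Real.sin α = s
  ext i j
  fin_cases i <;> fin_cases j <;>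
    simp [Apos, σy, Matrix.mul_apply, Fin.sum_univ_two] <;> ring_nf

lemma Upt_mul_Aneg_gram (α : ℝ) :
    (Upt α * Aneg)ᴴ * (Upt α * Aneg) =
      ((1 + Real.sin α ^ 2 : ℝ) : ℂ) • 1 + ((-(2 * Real.sin α) : ℝ) : ℂ) • σy := by
  unfold Upt
  generalize Real.sin α = s
  ext i j
  fin_cases i <;> fin_cases j <;>
    simp [Aneg, σx, σy, Matrix.mul_apply, Fin.sum_univ_two] <;> ring_nf

lemma trace_Pizu (z u : ℝ) : (Pizu z u).trace = 1 := by
  simp [Pizu, trace_fin_two]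

lemma exp_I_mul_ofReal (u : ℝ) :
    Complex.exp (Complex.I * u) = Real.cos u + Real.sin u * Complex.I := by
  rw [mul_comm, Complex.exp_mul_I, Complex.ofReal_cos, Complex.ofReal_sin]

lemma exp_neg_I_mul_ofReal (u : ℝ) :
    Complex.exp (-(Complex.I * u)) = Real.cos u - Real.sin u * Complex.I := by
  rw [← mul_neg, ← Complex.ofReal_neg, exp_I_mul_ofReal, Real.cos_neg, Real.sin_neg]
  push_cast; ring

lemma sin_eq_two_mul_sin_half_mul_cos_half (z : ℝ) :
    Real.sin z = 2 * Real.sin (z / 2) * Real.cos (z / 2) := by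
  rw [← Real.sin_two_mul]; ring_nf

lemma trace_Pizu_mul_σx (z u : ℝ) : (Pizu z u * σx).trace = (Real.sin z * Real.cos u : ℝ) := by
  simp [Pizu, σx, trace_fin_two, exp_I_mul_ofReal, exp_neg_I_mul_ofReal,
    sin_eq_two_mul_sin_half_mul_cos_half z]
  ring

lemma trace_Pizu_mul_σy (z u : ℝ) : (Pizu z u * σy).trace = (Real.sin z * Real.sin u : ℝ) := by
  simp [Pizu, σy, trace_fin_two, exp_I_mul_ofReal, exp_neg_I_mul_ofReal,
    sin_eq_two_mul_sin_half_mul_cos_half z]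
  ring_nf
  rw [Complex.I_sq]
  ring

lemma trace_Pizu_mul_σz (z u : ℝ) : (Pizu z u * σz).trace = (Real.cos z : ℝ) := by
  rw [show z = 2 * (z / 2) by ring, Real.cos_two_mul']
  simp [Pizu, σz, trace_fin_two]
  ring

section Postselection

variable {mx my mz nx ny nz Cxx Cyy Czz : ℝ} {V : Matrix (Fin 2) (Fin 2) ℂ} {c d : ℝ}

lemma re_trace_conj_ρcan (hV : Vᴴ * V = (c : ℂ) • 1 + (d : ℂ) • σy) :
    ((V ⊗ₖ 1) * ρcan mx my mz nx ny nz Cxx Cyy Czz * (V ⊗ₖ 1)ᴴ).trace.re = c + my * d := by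
  have h := trace_one_kronecker_mul_conj V 1 (ρcan mx my mz nx ny nz Cxx Cyy Czz)
  rw [one_kronecker_one, Matrix.one_mul] at h
  rw [h, hV, trace_smul_one_add_smul_σy_kronecker_mul_ρcan]
  simp [σx, σy, σz, trace_fin_two]

lemma re_trace_Pizu_conj_ρcan (hV : Vᴴ * V = (c : ℂ) • 1 + (d : ℂ) • σy) (z u : ℝ) :
    ((1 ⊗ₖ Pizu z u) * ((V ⊗ₖ 1) * ρcan mx my mz nx ny nz Cxx Cyy Czz * (V ⊗ₖ 1)ᴴ)).trace.re =
      (c + my * d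
        + c * (nx * (Real.sin z * Real.cos u) + ny * (Real.sin z * Real.sin u) + nz * Real.cos z)
        + Cyy * d * (Real.sin z * Real.sin u)) / 2 := by
  rw [trace_one_kronecker_mul_conj, hV, trace_smul_one_add_smul_σy_kronecker_mul_ρcan,
    trace_Pizu, trace_Pizu_mul_σx, trace_Pizu_mul_σy, trace_Pizu_mul_σz]
  norm_cast
  ring_nf

end Postselection

lemma postselected_prob_ne_of_neg (a b y Cyy c d : ℝ) (hc : c ≠ 0) (hd : d ≠ 0)
    (hplus : c + a * d ≠ 0) (hminus : c + a * -d ≠ 0) (h : a * b - Cyy * y ≠ 0) :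
    (c + a * d + c * b + Cyy * d * y) / 2 / (c + a * d) ≠
      (c + a * -d + c * b + Cyy * -d * y) / 2 / (c + a * -d) := by
  rw [Ne, div_eq_div_iff hplus hminus]
  intro heq
  have : 2 * c * d * (a * b - Cyy * y) = 0 := by linear_combination (-2 : ℝ) * heq
  simp_all

lemma exists_sin_ne_zero_abs_lt (a : ℝ) : ∃ α, Real.sin α ≠ 0 ∧ |2 * Real.sin α * a| < 1 := by
  set s := 1 / (2 * (1 + |a|))
  have hs : 0 < s := by positivity
  have hs1 : s ≤ 1 := by
    rw [div_le_one (by positivity)]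
    linarith [abs_nonneg a]
  refine ⟨Real.arcsin s, ?_, ?_⟩ <;> rw [Real.sin_arcsin (by linarith) hs1]
  · exact hs.ne'
  · rw [abs_mul, abs_mul, abs_two, abs_of_pos hs]
    calc 2 * s * |a| = |a| / (1 + |a|) := by simp only [s]; field_simp
      _ < 1 := (div_lt_one (by positivity)).2 (by linarith)

lemma exists_bloch_dot_ne_zero (wx wy wz : ℝ) (h : wx ≠ 0 ∨ wy ≠ 0 ∨ wz ≠ 0) :
    ∃ z u : ℝ, wx * (Real.sin z * Real.cos u) + wy * (Real.sin z * Real.sin u)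
      + wz * Real.cos z ≠ 0 := by
  rcases h with h | h | h
  · exact ⟨Real.pi / 2, 0, by simpa using h⟩
  · exact ⟨Real.pi / 2, Real.pi / 2, by simpa using h⟩
  · exact ⟨0, 0, by simpa using h⟩

theorem stmt9_general (mx my mz nx ny nz Cxx Cyy Czz : ℝ)
    (ρ : Matrix (Fin 2 × Fin 2) (Fin 2 × Fin 2) ℂ)
    (hρ : ρ = ρcan mx my mz nx ny nz Cxx Cyy Czz)
    (hy : my * nx ≠ 0 ∨ my * ny - Cyy ≠ 0 ∨ my * nz ≠ 0) :
    ∃ α z u : ℝ,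
      ((postPlus α ρ).trace).re ≠ 0 ∧
      ((postMinus α ρ).trace).re ≠ 0 ∧
      Pplus α ρ (Pizu z u) ≠ Pminus α ρ (Pizu z u) := by
  subst hρ
  obtain ⟨α, hs, hsmall⟩ := exists_sin_ne_zero_abs_lt my
  obtain ⟨z, u, hzu⟩ := exists_bloch_dot_ne_zero _ _ _ hy
  have hplus : 1 + Real.sin α ^ 2 + my * (2 * Real.sin α) ≠ 0 := by
    nlinarith [abs_lt.1 hsmall, sq_nonneg (Real.sin α)]
  have hminus : 1 + Real.sin α ^ 2 + my * -(2 * Real.sin α) ≠ 0 := by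
    nlinarith [abs_lt.1 hsmall, sq_nonneg (Real.sin α)]
  have gplus := Upt_mul_Apos_gram α
  have gminus := Upt_mul_Aneg_gram α
  refine ⟨α, z, u, ?_, ?_, ?_⟩
  · rwa [postPlus, re_trace_conj_ρcan gplus]
  · rwa [postMinus, re_trace_conj_ρcan gminus]
  · rw [Pplus, Pminus, postPlus, postMinus, re_trace_conj_ρcan gplus,
      re_trace_conj_ρcan gminus, re_trace_Pizu_conj_ρcan gplus,
      re_trace_Pizu_conj_ρcan gminus]
    refine postselected_prob_ne_of_neg _ _ _ _ _ _ (by positivity) (by simpa using hs)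
      hplus hminus ?_
    intro h
    exact hzu (by linear_combination h)

/-- Signaling direction of Theorem 1: if at least one of `my m'x`,
`my m'y − Cyy`, `my m'z` is nonzero, then Bob can choose `α`, `z`, `u` so that
the post-selection traces are nonzero and his outcome probabilities differ for
Alice's two operations, i.e. Bob gains information about Alice's operation. -/
theorem stmt9 (mx my mz nx ny nz Cxx Cyy Czz : ℝ)
    (ρ : Matrix (Fin 2 × Fin 2) (Fin 2 × Fin 2) ℂ)
    (hρ : ρ = ρcan mx my mz nx ny nz Cxx Cyy Czz)
    (hpsd : ρ.PosSemidef)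
    (hy : my * nx ≠ 0 ∨ my * ny - Cyy ≠ 0 ∨ my * nz ≠ 0) :
    ∃ α z u : ℝ,
      ((postPlus α ρ).trace).re ≠ 0 ∧
      ((postMinus α ρ).trace).re ≠ 0 ∧
      Pplus α ρ (Pizu z u) ≠ Pminus α ρ (Pizu z u) :=
  stmt9_general mx my mz nx ny nz Cxx Cyy Czz ρ hρ hy
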